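/- arXiv:2510.10192 — 2 statements merged into one kernel-verified Lean document; each statement's English description precedes it below -/
import Mathlib

section
/- Let r, s be positive integers and c a nonzero rational. With a = c²(32r³+75r²s+78rs²+31s³)/(108(r+s)²s) and b = c²(31r³+75rs²+78r²s+32s³)/(108(r+s)²r), the polynomial P(x) = (x²+cx+a)^r (x²-cx+b)^s satisfies: the quotient P'(x) / ((x²+cx+a)^(r-1)(x²-cx+b)^(s-1)) is a degree-3 polynomial which is a perfect cube, namely a constant multiple of (x - w₀)³ for some w₀. -/
open Polynomial

/-- With the stated values of a and b, the degree-3 cofactor of the derivative of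
(x²+cx+a)^r (x²-cx+b)^s is a perfect cube -2(r+s)(x-w₀)³. -/
theorem stmt4 (r s : ℕ) (hr : 0 < r) (hs : 0 < s) (c : ℚ) (hc : c ≠ 0)
    (a b : ℚ)
    (ha : a = c ^ 2 * (32 * (r : ℚ) ^ 3 + 75 * (r : ℚ) ^ 2 * s + 78 * (r : ℚ) * (s : ℚ) ^ 2
        + 31 * (s : ℚ) ^ 3) / (108 * ((r : ℚ) + s) ^ 2 * s))
    (hb : b = c ^ 2 * (31 * (r : ℚ) ^ 3 + 75 * (r : ℚ) * (s : ℚ) ^ 2 + 78 * (r : ℚ) ^ 2 * s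
        + 32 * (s : ℚ) ^ 3) / (108 * ((r : ℚ) + s) ^ 2 * r)) :
    ∃ w₀ : ℚ,
      C (-2 * ((r : ℚ) + s)) * X ^ 3 + C (c * r - c * s) * X ^ 2
        + C (c ^ 2 * r + c ^ 2 * s - 2 * a * s - 2 * b * r) * X + C (a * c * s - b * c * r) =
      C (-2 * ((r : ℚ) + s)) * (X - C w₀) ^ 3 := by
  have hr' : (0:ℚ) < (r:ℚ) := by exact_mod_cast hr
  have hs' : (0:ℚ) < (s:ℚ) := by exact_mod_cast hs
  have hrs : ((r:ℚ) + s) ≠ 0 := by positivity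
  have hrne : (r:ℚ) ≠ 0 := ne_of_gt hr'
  have hsne : (s:ℚ) ≠ 0 := ne_of_gt hs'
  refine ⟨c * ((r:ℚ) - s) / (6 * ((r:ℚ) + s)), ?_⟩
  set w₀ := c * ((r:ℚ) - s) / (6 * ((r:ℚ) + s)) with hw
  have k2 : c * (r:ℚ) - c * s = 6 * ((r:ℚ) + s) * w₀ := by
    rw [hw]; field_simp
  have k1 : c ^ 2 * (r:ℚ) + c ^ 2 * s - 2 * a * s - 2 * b * r
      = -6 * ((r:ℚ) + s) * w₀ ^ 2 := by
    rw [hw, ha, hb]; field_simp; ring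
  have k0 : a * c * (s:ℚ) - b * c * r = 2 * ((r:ℚ) + s) * w₀ ^ 3 := by
    rw [hw, ha, hb]; field_simp; ring
  rw [k2, k1, k0]
  simp only [map_mul, map_add, map_neg, map_ofNat, map_pow]
  ring
end

section
/- Let p be a positive integer, K = (-1)^(p+1)(2p+1)!!/(2·(2p)!!), C = -1/2, and P(x) = K·∑_{k=0}^{p}(-1)^k C(p,k) x^{2p-2k+1}/(2p-2k+1) + C. Then the critical points of P are exactly ±1 (each of multiplicity p as roots of P'), and the set of critical values {P(1), P(-1)} equals {0, -1}. -/
open Polynomial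


lemma auxF (n : ℕ) : ∀ x : ℚ, (∀ i : ℕ, i ≤ n → x + i ≠ 0) →
    ∑ i ∈ Finset.range (n+1), (-1)^i * (n.choose i : ℚ) / (x + i)
      = (n.factorial : ℚ) / ∏ i ∈ Finset.range (n+1), (x + i) := by
  induction n with
  | zero => intro x hx; simp
  | succ n ih =>
    intro x hx
    have hx' : ∀ i : ℕ, i ≤ n → (x+1) + i ≠ 0 := by
      intro i hi
      have h := hx (i+1) (by omega)
      push_cast at h ⊢
      intro hc; apply h; linarith
    have hxn : ∀ i : ℕ, i ≤ n → x + i ≠ 0 := fun i hi => hx i (by omega)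
    have hx0 : x ≠ 0 := by simpa using hx 0 (by omega)
    have e3 : ∑ i ∈ Finset.range (n+1), (-1)^(i+1) * (n.choose (i+1) : ℚ) / (x + ((i+1 : ℕ) : ℚ))
        = (∑ i ∈ Finset.range (n+1), (-1)^i * (n.choose i : ℚ) / (x + i)) - 1/x := by
      have h1 := Finset.sum_range_succ' (fun i => (-1)^i * (n.choose i : ℚ) / (x + i)) (n+1)
      have h2 := Finset.sum_range_succ (fun i => (-1)^i * (n.choose i : ℚ) / (x + i)) (n+1)
      simp only [Nat.choose_succ_self, Nat.cast_zero, Nat.choose_zero_right, Nat.cast_one,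
        pow_zero, one_mul, add_zero, zero_div, mul_zero] at h1 h2
      rw [h2] at h1
      linarith [h1]
    have step1 : ∑ i ∈ Finset.range (n+2), (-1)^i * ((n+1).choose i : ℚ) / (x + i)
        = (∑ i ∈ Finset.range (n+1), (-1)^i * (n.choose i : ℚ) / (x + i))
          - ∑ i ∈ Finset.range (n+1), (-1)^i * (n.choose i : ℚ) / ((x+1) + i) := by
      rw [Finset.sum_range_succ' (fun i => (-1)^i * ((n+1).choose i : ℚ) / (x + i)) (n+1)]
      have e1 : ∀ i ∈ Finset.range (n+1),
          (-1)^(i+1) * ((n+1).choose (i+1) : ℚ) / (x + ((i+1 : ℕ) : ℚ))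
          = (-1)^(i+1) * (n.choose (i+1) : ℚ) / (x + ((i+1 : ℕ) : ℚ))
            + (-((-1)^i * (n.choose i : ℚ) / ((x+1) + i))) := by
        intro i hi
        have hne : x + ((i:ℚ) + 1) ≠ 0 := by
          have := hx (i+1) (by simp at hi; omega); push_cast at this; exact this
        rw [Nat.choose_succ_succ]
        push_cast
        rw [show x + 1 + (i:ℚ) = x + ((i:ℚ)+1) from by ring]
        field_simp
        ring
      rw [Finset.sum_congr rfl e1, Finset.sum_add_distrib, e3, Finset.sum_neg_distrib]
      simp only [Nat.choose_zero_right, Nat.cast_zero, Nat.cast_one, pow_zero, one_mul, add_zero]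
      ring
    rw [step1, ih x hxn, ih (x+1) hx']
    have hA : (∏ i ∈ Finset.range (n+1), (x + (i:ℚ))) ≠ 0 :=
      Finset.prod_ne_zero_iff.2 fun i hi => hxn i (Nat.lt_succ_iff.1 (Finset.mem_range.1 hi))
    have hB : (∏ i ∈ Finset.range (n+1), ((x+1) + (i:ℚ))) ≠ 0 :=
      Finset.prod_ne_zero_iff.2 fun i hi => hx' i (Nat.lt_succ_iff.1 (Finset.mem_range.1 hi))
    have hlast : x + ((n+1 : ℕ) : ℚ) ≠ 0 := hx (n+1) le_rfl
    have hprod2 : ∏ i ∈ Finset.range (n+2), (x + (i:ℚ))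
        = x * ∏ i ∈ Finset.range (n+1), ((x+1) + (i:ℚ)) := by
      rw [Finset.prod_range_succ' (fun i => x + (i:ℚ)) (n+1)]
      simp only [Nat.cast_zero, add_zero]
      rw [mul_comm]
      congr 1
      exact Finset.prod_congr rfl fun i _ => by push_cast; ring
    have hprod1 : ∏ i ∈ Finset.range (n+2), (x + (i:ℚ))
        = (∏ i ∈ Finset.range (n+1), (x + (i:ℚ))) * (x + ((n+1:ℕ):ℚ)) :=
      Finset.prod_range_succ _ _
    have hrel : (∏ i ∈ Finset.range (n+1), (x + (i:ℚ))) * (x + ((n+1:ℕ):ℚ))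
        = x * ∏ i ∈ Finset.range (n+1), ((x+1) + (i:ℚ)) := by rw [← hprod1, hprod2]
    rw [hprod1, Nat.factorial_succ, div_sub_div _ _ hA hB,
      div_eq_div_iff (mul_ne_zero hA hB) (mul_ne_zero hA hlast)]
    push_cast at hrel ⊢
    linear_combination (-(n.factorial : ℚ) * (∏ i ∈ Finset.range (n+1), (x + (i:ℚ)))) * hrel

lemma prodHalf (p : ℕ) : (2:ℚ)^(p+1) * ∏ i ∈ Finset.range (p+1), ((1/2 : ℚ) + i)
    = ((2*p+1).doubleFactorial : ℚ) := by
  induction p with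
  | zero => simp [Nat.doubleFactorial]
  | succ p ih =>
    rw [Finset.prod_range_succ, show 2*(p+1)+1 = (2*p+1)+2 from by ring,
      Nat.doubleFactorial_add_two]
    push_cast
    push_cast at ih
    linear_combination (2*(p:ℚ)+3) * ih

lemma sumS (p : ℕ) : ∑ j ∈ Finset.range (p+1), (-1)^j * (p.choose j : ℚ)/(2*j+1)
    = 2^p * (p.factorial : ℚ) / ((2*p+1).doubleFactorial : ℚ) := by
  have hx : ∀ i : ℕ, i ≤ p → (1/2 : ℚ) + i ≠ 0 := by
    intro i _; positivity
  have h := auxF p (1/2) hx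
  have hprod := prodHalf p
  have hPpos : (0:ℚ) < ∏ i ∈ Finset.range (p+1), ((1/2 : ℚ) + i) :=
    Finset.prod_pos fun i _ => by positivity
  have hstep : ∑ j ∈ Finset.range (p+1), (-1)^j * (p.choose j : ℚ)/(2*j+1)
      = (1/2) * ∑ i ∈ Finset.range (p+1), (-1)^i * (p.choose i : ℚ) / ((1/2:ℚ) + i) := by
    rw [Finset.mul_sum]
    refine Finset.sum_congr rfl fun j _ => ?_
    have hne : ((1:ℚ)/2 + (j:ℚ)) ≠ 0 := by positivity
    rw [show (1/2:ℚ) * ((-1)^j * (p.choose j:ℚ)/((1/2:ℚ)+(j:ℚ)))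
        = (-1)^j * (p.choose j:ℚ)/(2*((1/2:ℚ)+(j:ℚ))) from by
          rw [div_mul_div_comm, one_mul, mul_comm]]
    congr 1
    ring
  have hdpos : (0:ℚ) < ((2*p+1).doubleFactorial : ℚ) := by
    exact_mod_cast Nat.doubleFactorial_pos _
  rw [hstep, h,
    show (1/2:ℚ) * ((p.factorial:ℚ)/∏ i ∈ Finset.range (p+1), ((1/2 : ℚ) + i))
      = (p.factorial:ℚ)/(2 * ∏ i ∈ Finset.range (p+1), ((1/2 : ℚ) + i)) from by
        rw [div_mul_div_comm, one_mul, mul_comm],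
    div_eq_div_iff (by positivity) hdpos.ne']
  linear_combination (-(p.factorial : ℚ)) * hprod

/-- The Shabat polynomial of the (p,p)-brush: critical points exactly ±1 and
critical values {0,-1}. -/
theorem stmt12 (p : ℕ) (hp : 0 < p) (K : ℚ)
    (hK : K = (-1) ^ (p + 1) * ((2 * p + 1).doubleFactorial : ℚ)
        / (2 * ((2 * p).doubleFactorial : ℚ)))
    (P : ℚ[X])
    (hP : P = C K * (∑ k ∈ Finset.range (p + 1),
        C ((-1) ^ k * (p.choose k : ℚ) / (2 * (p - k) + 1)) * X ^ (2 * (p - k) + 1))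
        + C (-(1 / 2))) :
    derivative P = C K * (X - 1) ^ p * (X + 1) ^ p ∧
      (∀ z : ℚ, (derivative P).eval z = 0 ↔ z = 1 ∨ z = -1) ∧
      ({P.eval 1, P.eval (-1)} : Set ℚ) = {0, -1} := by
  have hp' : p ≠ 0 := hp.ne'
  have hsignQ : ∀ k : ℕ, k ≤ p → ((-1:ℚ))^(p-k) = (-1)^p * (-1)^k := by
    intro k hk
    have hinv : ((-1:ℚ)^k)⁻¹ = (-1)^k := by
      rcases Nat.even_or_odd k with h | h
      · simp [h.neg_one_pow]
      · rw [h.neg_one_pow]; norm_num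
    rw [pow_sub₀ _ (by norm_num) hk, hinv]
  have hfac : ((X:ℚ[X]) - 1)^p * (X+1)^p = (X^2 - 1)^p := by
    rw [← mul_pow]; congr 1; ring
  have hexp : ((X:ℚ[X])^2 - 1)^p
      = ∑ k ∈ Finset.range (p+1), C ((-1:ℚ)^k * (p.choose k : ℚ)) * X^(2*(p-k)) := by
    rw [sub_pow, ← Finset.sum_range_reflect]
    refine Finset.sum_congr rfl fun k hk => ?_
    have hk' : k ≤ p := by simp only [Finset.mem_range] at hk; omega
    have hidx : p + 1 - 1 - k = p - k := by omega
    rw [hidx, one_pow, mul_one, Nat.choose_symm hk']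
    have hsgn : ((-1:ℚ[X]))^(p-k+p) = (-1)^k := by
      have h1 : ((-1:ℚ[X]))^(p-k+p) * (-1)^k = ((-1:ℚ[X]))^(2*p) := by
        rw [← pow_add, show p-k+p+k = 2*p from by omega]
      have h2 : ((-1:ℚ[X]))^(2*p) = 1 := by rw [pow_mul]; norm_num
      have h3 : ((-1:ℚ[X]))^k * (-1)^k = 1 := by
        rw [← pow_add, show k+k = 2*k from by ring, pow_mul]; norm_num
      calc ((-1:ℚ[X]))^(p-k+p) = ((-1:ℚ[X]))^(p-k+p) * ((-1)^k * (-1)^k) := by rw [h3, mul_one]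
        _ = (((-1:ℚ[X]))^(p-k+p) * (-1)^k) * (-1)^k := by ring
        _ = (-1)^k := by rw [h1, h2, one_mul]
    rw [hsgn, ← pow_mul, map_mul, map_pow, map_neg, map_one, map_natCast]
    ring
  have hder : derivative P = C K * (X - 1 : ℚ[X]) ^ p * (X + 1) ^ p := by
    rw [hP, derivative_add, derivative_C, add_zero, derivative_C_mul, derivative_sum,
      mul_assoc, hfac, hexp]
    congr 1
    refine Finset.sum_congr rfl fun k hk => ?_
    have hk' : k ≤ p := by simp only [Finset.mem_range] at hk; omega
    rw [derivative_C_mul, derivative_X_pow, show 2*(p-k)+1-1 = 2*(p-k) from rfl,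
      ← mul_assoc, ← C_mul]
    congr 2
    have hne : (2 * ((p:ℚ) - (k:ℚ)) + 1) ≠ 0 := by rw [← Nat.cast_sub hk']; positivity
    push_cast [Nat.cast_sub hk']
    exact div_mul_cancel₀ _ hne
  refine ⟨hder, ?_, ?_⟩
  · -- roots
    have hdf1 : (0:ℚ) < ((2*p+1).doubleFactorial : ℚ) := by
      exact_mod_cast Nat.doubleFactorial_pos _
    have hK0 : K ≠ 0 := by
      rw [hK]
      exact div_ne_zero (mul_ne_zero (pow_ne_zero _ (by norm_num)) hdf1.ne') (by positivity)
    intro z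
    rw [hder]
    simp only [eval_mul, eval_pow, eval_sub, eval_add, eval_one, eval_X, eval_C,
      mul_eq_zero, pow_eq_zero_iff hp', sub_eq_zero]
    constructor
    · rintro ((h | h) | h)
      · exact absurd h hK0
      · exact Or.inl h
      · right; linarith [h]
    · rintro (h | h)
      · exact Or.inl (Or.inr h)
      · right; rw [h]; ring
  · -- critical values
    set S : ℚ := ∑ k ∈ Finset.range (p+1),
        (-1)^k * (p.choose k : ℚ) / (2 * ((p:ℚ) - (k:ℚ)) + 1) with hSdef
    have hS : S = (-1)^p * (2^p * (p.factorial : ℚ) / ((2*p+1).doubleFactorial : ℚ)) := by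
      have h1 : S = ∑ j ∈ Finset.range (p+1), (-1)^(p-j) * (p.choose j : ℚ)/(2*(j:ℚ)+1) := by
        rw [hSdef, ← Finset.sum_range_reflect
          (fun j => ((-1:ℚ))^(p-j) * (p.choose j : ℚ)/(2*(j:ℚ)+1)) (p+1)]
        refine Finset.sum_congr rfl fun k hk => ?_
        have hk' : k ≤ p := by simp only [Finset.mem_range] at hk; omega
        have hidx : p + 1 - 1 - k = p - k := by omega
        rw [hidx, Nat.sub_sub_self hk', Nat.choose_symm hk', Nat.cast_sub hk']
      have h2 : S = (-1)^p * ∑ j ∈ Finset.range (p+1), (-1)^j * (p.choose j : ℚ)/(2*(j:ℚ)+1) := by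
        rw [h1, Finset.mul_sum]
        refine Finset.sum_congr rfl fun j hj => ?_
        have hj' : j ≤ p := by simp only [Finset.mem_range] at hj; omega
        rw [hsignQ j hj']
        ring
      rw [h2, sumS]
    have hdf1 : (0:ℚ) < ((2*p+1).doubleFactorial : ℚ) := by
      exact_mod_cast Nat.doubleFactorial_pos _
    have hF : (0:ℚ) < (p.factorial : ℚ) := by exact_mod_cast p.factorial_pos
    have hD0 : ((2*p).doubleFactorial : ℚ) = 2^p * (p.factorial : ℚ) := by
      exact_mod_cast congrArg (Nat.cast : ℕ → ℚ) (Nat.doubleFactorial_two_mul p)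
    have hsign : ((-1:ℚ))^(p+1) * (-1)^p = -1 := by
      rw [← pow_add, show p+1+p = 2*p+1 from by ring]
      exact Odd.neg_one_pow ⟨p, by ring⟩
    have hKS : K * S = -(1/2) := by
      rw [hK, hS, hD0]
      rcases Nat.even_or_odd p with hpar | hpar
      · rw [hpar.neg_one_pow, show ((-1:ℚ))^(p+1) = -1 from Odd.neg_one_pow hpar.add_one]
        field_simp
      · rw [hpar.neg_one_pow, show ((-1:ℚ))^(p+1) = 1 from Even.neg_one_pow hpar.add_one]
        field_simp
    have hev1 : P.eval 1 = -1 := by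
      rw [hP]
      simp only [eval_add, eval_mul, eval_C, eval_finset_sum, eval_pow, eval_X, one_pow, mul_one]
      rw [← hSdef, hKS]
      norm_num
    have hev2 : P.eval (-1) = 0 := by
      rw [hP]
      simp only [eval_add, eval_mul, eval_C, eval_finset_sum, eval_pow, eval_X]
      have : ∑ k ∈ Finset.range (p+1),
          ((-1:ℚ))^k * (p.choose k : ℚ) / (2 * ((p:ℚ) - (k:ℚ)) + 1) * (-1)^(2*(p-k)+1)
          = -S := by
        rw [hSdef, ← Finset.sum_neg_distrib]
        refine Finset.sum_congr rfl fun k _ => ?_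
        rw [show ((-1:ℚ))^(2*(p-k)+1) = -1 from Odd.neg_one_pow ⟨p-k, by ring⟩]
        ring
      rw [this]
      have : K * -S = 1/2 := by linarith [hKS]
      rw [this]
      norm_num
    rw [hev1, hev2]
    exact Set.pair_comm _ _
end
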